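/- For every partial Boolean function g ⊆ {0,1}^m × {0,1}, the max conflict complexity is at least the sabotage complexity: χ̄(g) ≥ RS(g). -/

import Mathlib

open Finset

inductive DTree (ι : Type) (S : Type) where
  | leaf : S → DTree ι S
  | node : ι → DTree ι S → DTree ι S → DTree ι S

namespace DTree

/-- Evaluate a deterministic decision tree on an input. -/
def eval {ι S : Type} : DTree ι S → (ι → Bool) → S
  | leaf s, _ => s
  | node i t0 t1, x => if x i then t1.eval x else t0.eval x

/-- The depth (worst-case number of queries) of a decision tree. -/
def depth {ι S : Type} : DTree ι S → ℕ
  | leaf _ => 0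
  | node _ t0 t1 => max t0.depth t1.depth + 1

/-- The number of queries a decision tree makes on a given input. -/
def queries {ι S : Type} : DTree ι S → (ι → Bool) → ℕ
  | leaf _, _ => 0
  | node i t0 t1, x => (if x i then t1.queries x else t0.queries x) + 1

end DTree

/-- A probability distribution on a finite type, as a nonnegative real weight function summing to 1. -/
def IsDist {γ : Type} [Fintype γ] (μ : γ → ℝ) : Prop :=
  (∀ x, 0 ≤ μ x) ∧ ∑ x, μ x = 1

/-- The support of `μ` is contained in `A`. -/
def SuppIn {γ : Type} [Fintype γ] (μ : γ → ℝ) (A : Set γ) : Prop :=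
  ∀ x, μ x ≠ 0 → x ∈ A

/-- `g⁻¹(b)` for a partial Boolean function given as a relation. -/
def preim {m : ℕ} (g : Set ((Fin m → Bool) × Bool)) (b : Bool) : Set (Fin m → Bool) :=
  {x | (x, b) ∈ g ∧ (x, !b) ∉ g}

/-- `x` is a valid input of the partial Boolean function `g`. -/
def ValidIn {m : ℕ} (g : Set ((Fin m → Bool) × Bool)) (x : Fin m → Bool) : Prop :=
  x ∈ preim g false ∨ x ∈ preim g true

/-- A deterministic decision tree computes the partial Boolean function `g`. -/
def Computes {m : ℕ} (T : DTree (Fin m) Bool) (g : Set ((Fin m → Bool) × Bool)) : Prop :=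
  ∀ b : Bool, ∀ x ∈ preim g b, T.eval x = b

/-- The paper's convention for partial Boolean functions: for every invalid input `y`, both
`(y,0)` and `(y,1)` belong to the relation (so that any output is accepted on invalid inputs).
`totalize g` adds all such pairs; it has the same valid inputs and the same `g⁻¹(b)` as `g`. -/
def totalize {m : ℕ} (g : Set ((Fin m → Bool) × Bool)) : Set ((Fin m → Bool) × Bool) :=
  {p | p ∈ g ∨ ¬ ValidIn g p.1}

/-- Probability that coordinate `j` equals `b` under `μ`. -/
noncomputable def prb {m : ℕ} (μ : (Fin m → Bool) → ℝ) (j : Fin m) (b : Bool) : ℝ :=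
  ∑ x, if x j = b then μ x else 0

/-- `μ` conditioned on coordinate `j` being equal to `b` (zero if the event has probability zero). -/
noncomputable def condD {m : ℕ} (μ : (Fin m → Bool) → ℝ) (j : Fin m) (b : Bool) :
    (Fin m → Bool) → ℝ :=
  fun x => if x j = b then μ x / prb μ j b else 0

/-- `chiW T μ0 μ1 = (Σ_v Δ(v)R(v), Σ_v d_T(v)Δ(v)R(v))`, where at a node `v` querying `j`,
`p_b(v)` is the probability that the queried bit is `0` under `μ_b` conditioned on reaching `v`,
`Δ(v) = |p_0(v) - p_1(v)|`, and `R(v)` is the product along the path to `v` of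
`min` of the two conditional transition probabilities; the depth of the root is 1. -/
noncomputable def chiW {m : ℕ} {S : Type} :
    DTree (Fin m) S → ((Fin m → Bool) → ℝ) → ((Fin m → Bool) → ℝ) → ℝ × ℝ
  | .leaf _, _, _ => (0, 0)
  | .node j t0 t1, μ0, μ1 =>
    let p0 := prb μ0 j false
    let p1 := prb μ1 j false
    let r0 := chiW t0 (condD μ0 j false) (condD μ1 j false)
    let r1 := chiW t1 (condD μ0 j true) (condD μ1 j true)
    (|p0 - p1| + min p0 p1 * r0.1 + min (1 - p0) (1 - p1) * r1.1,
     |p0 - p1| + min p0 p1 * r0.1 + min (1 - p0) (1 - p1) * r1.1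
       + min p0 p1 * r0.2 + min (1 - p0) (1 - p1) * r1.2)

/-- The conflict complexity `χ(T,(μ0,μ1)) = Σ_v d_T(v)·Δ(v)·R(v)` of a tree with respect to a
pair of distributions. -/
noncomputable def chi {m : ℕ} {S : Type} (T : DTree (Fin m) S)
    (μ0 μ1 : (Fin m → Bool) → ℝ) : ℝ :=
  (chiW T μ0 μ1).2

/-- `(T,(μ0,μ1))` is full: `Σ_v Δ(v)·R(v) = 1`. -/
def FullPair {m : ℕ} {S : Type} (T : DTree (Fin m) S)
    (μ0 μ1 : (Fin m → Bool) → ℝ) : Prop :=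
  (chiW T μ0 μ1).1 = 1

/-- The max conflict complexity `χ̄(g) = max_Q min_T E_{(μ0,μ1)∼Q}[χ(T,(μ0,μ1))]`, where `Q`
ranges over (finitely supported) distributions over pairs of distributions supported on
`g⁻¹(0)` and `g⁻¹(1)`, and the minimum is over deterministic trees computing `g`. -/
noncomputable def maxConflict {m : ℕ} (g : Set ((Fin m → Bool) × Bool)) : ℝ :=
  sSup { c : ℝ | ∃ (k : ℕ) (w : Fin k → ℝ) (M0 M1 : Fin k → ((Fin m → Bool) → ℝ)),
    IsDist w ∧
    (∀ j, IsDist (M0 j) ∧ IsDist (M1 j) ∧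
      SuppIn (M0 j) (preim g false) ∧ SuppIn (M1 j) (preim g true)) ∧
    c = sInf { x : ℝ | ∃ T : DTree (Fin m) Bool, Computes T g ∧
      x = ∑ j, w j * chi T (M0 j) (M1 j) } }

/-- The four-letter alphabet `{0, 1, *, †}` used for sabotaged inputs. -/
inductive Sab4 where
  | zero | one | star | dag
deriving DecidableEq

instance instFintypeSab4 : Fintype Sab4 where
  elems := {Sab4.zero, Sab4.one, Sab4.star, Sab4.dag}
  complete := fun x => by cases x <;> simp

/-- Decision trees over the four-letter alphabet. -/
inductive QTree (ι : Type) (S : Type) where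
  | leaf : S → QTree ι S
  | node : ι → (Sab4 → QTree ι S) → QTree ι S

namespace QTree

def eval {ι S : Type} : QTree ι S → (ι → Sab4) → S
  | leaf s, _ => s
  | node i ch, w => (ch (w i)).eval w

def queries {ι S : Type} : QTree ι S → (ι → Sab4) → ℕ
  | leaf _, _ => 0
  | node i ch, w => (ch (w i)).queries w + 1

end QTree

/-- A Boolean string is consistent with the non-special coordinates of a sabotaged string. -/
def ConsistentWith {m : ℕ} (x : Fin m → Bool) (w : Fin m → Sab4) : Prop :=
  ∀ i, (w i = Sab4.zero → x i = false) ∧ (w i = Sab4.one → x i = true)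

/-- `w` is a valid (sabotaged) input of `g_sab`: it contains exactly one kind of special symbol,
and its special symbols can be filled in to produce a string in `g⁻¹(0)` and also one in `g⁻¹(1)`. -/
def SabValid {m : ℕ} (g : Set ((Fin m → Bool) × Bool)) (w : Fin m → Sab4) : Prop :=
  (((∃ i, w i = Sab4.star) ∧ ∀ i, w i ≠ Sab4.dag) ∨
    ((∃ i, w i = Sab4.dag) ∧ ∀ i, w i ≠ Sab4.star)) ∧
  (∃ x ∈ preim g false, ConsistentWith x w) ∧ (∃ y ∈ preim g true, ConsistentWith y w)

/-- A tree computes `g_sab`: on every sabotaged input it outputs the special symbol it contains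
(`false` encoding `*` and `true` encoding `†`). -/
def SabComputes {m : ℕ} (T : QTree (Fin m) Bool) (g : Set ((Fin m → Bool) × Bool)) : Prop :=
  ∀ w : Fin m → Sab4, SabValid g w →
    (((∃ i, w i = Sab4.star) → T.eval w = false) ∧ ((∃ i, w i = Sab4.dag) → T.eval w = true))

/-- Sabotage complexity `RS(g) = R_0(g_sab)`: the least `c` such that some (finitely supported)
zero-error randomized algorithm for `g_sab` makes at most `c` expected queries on every
sabotaged input. -/
noncomputable def RS {m : ℕ} (g : Set ((Fin m → Bool) × Bool)) : ℝ :=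
  sInf { c : ℝ | ∃ (k : ℕ) (wt : Fin k → ℝ) (T : Fin k → QTree (Fin m) Bool),
    IsDist wt ∧ (∀ i, SabComputes (T i) g) ∧
    ∀ w : Fin m → Sab4, SabValid g w → ∑ i, wt i * ((T i).queries w : ℝ) ≤ c }

section Aux
open Classical

variable {m : ℕ}

/-- Point mass distribution. -/
noncomputable def delta (x : Fin m → Bool) : (Fin m → Bool) → ℝ := fun z => if z = x then 1 else 0

lemma delta_nonneg (x : Fin m → Bool) : ∀ z, 0 ≤ delta x z := by
  intro z; unfold delta; split <;> norm_num

lemma delta_sum (x : Fin m → Bool) : ∑ z, delta x z = 1 := by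
  simp [delta]

lemma delta_isDist (x : Fin m → Bool) : IsDist (delta x) := ⟨delta_nonneg x, delta_sum x⟩

lemma prb_delta (x : Fin m → Bool) (j : Fin m) (b : Bool) :
    prb (delta x) j b = if x j = b then 1 else 0 := by
  unfold prb delta
  rw [Finset.sum_eq_single x]
  · simp
  · intro z _ hz; simp [hz]
  · intro h; exact absurd (Finset.mem_univ x) h

lemma condD_delta_eq {x : Fin m → Bool} {j : Fin m} {b : Bool} (h : x j = b) :
    condD (delta x) j b = delta x := by
  funext z
  unfold condD
  rw [prb_delta]
  by_cases hz : z = x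
  · subst hz; simp [h, delta]
  · simp only [delta, if_neg hz]
    split <;> simp

lemma condD_delta_ne {x : Fin m → Bool} {j : Fin m} {b : Bool} (h : x j ≠ b) :
    condD (delta x) j b = fun _ => 0 := by
  funext z
  unfold condD
  by_cases hz : z j = b
  · have hzx : z ≠ x := by intro e; subst e; exact h hz
    simp [hz, delta, hzx]
  · simp [hz]

lemma prb_zerofun (j : Fin m) (b : Bool) : prb (fun _ => (0:ℝ)) j b = 0 := by
  unfold prb; simp

lemma condD_zerofun (j : Fin m) (b : Bool) : condD (fun _ => (0:ℝ)) j b = fun _ => 0 := by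
  funext z; unfold condD; split <;> simp

lemma chiW_zerofun {S : Type} (T : DTree (Fin m) S) :
    chiW T (fun _ => (0:ℝ)) (fun _ => 0) = (0, 0) := by
  induction T with
  | leaf s => simp [chiW]
  | node j t0 t1 ih0 ih1 =>
    simp only [chiW, prb_zerofun, condD_zerofun, ih0, ih1]
    norm_num

end Aux
section Aux2
variable {m : ℕ}

lemma chiW_node_ff {S : Type} (t0 t1 : DTree (Fin m) S) {x y : Fin m → Bool} {j : Fin m}
    (hx : x j = false) (hy : y j = false) :
    chiW (DTree.node j t0 t1) (delta x) (delta y) =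
      ((chiW t0 (delta x) (delta y)).1,
       (chiW t0 (delta x) (delta y)).1 + (chiW t0 (delta x) (delta y)).2) := by
  simp only [chiW, prb_delta, hx, hy, if_pos rfl]
  rw [condD_delta_eq hx, condD_delta_eq hy,
    condD_delta_ne (by simp [hx]), condD_delta_ne (by simp [hy]), chiW_zerofun]
  norm_num

lemma chiW_node_tt {S : Type} (t0 t1 : DTree (Fin m) S) {x y : Fin m → Bool} {j : Fin m}
    (hx : x j = true) (hy : y j = true) :
    chiW (DTree.node j t0 t1) (delta x) (delta y) =
      ((chiW t1 (delta x) (delta y)).1,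
       (chiW t1 (delta x) (delta y)).1 + (chiW t1 (delta x) (delta y)).2) := by
  simp only [chiW, prb_delta, hx, hy]
  rw [condD_delta_eq hx, condD_delta_eq hy,
    condD_delta_ne (by simp [hx]), condD_delta_ne (by simp [hy]), chiW_zerofun]
  norm_num

lemma chiW_node_diff {S : Type} (t0 t1 : DTree (Fin m) S) {x y : Fin m → Bool} {j : Fin m}
    (hxy : x j ≠ y j) :
    chiW (DTree.node j t0 t1) (delta x) (delta y) = (1, 1) := by
  cases hx : x j <;> cases hy : y j
  · exact absurd (hx.trans hy.symm) hxy
  · simp only [chiW, prb_delta, hx, hy]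
    norm_num
  · simp only [chiW, prb_delta, hx, hy]
    norm_num
  · exact absurd (hx.trans hy.symm) hxy

lemma chiW_fst_eq_one (T : DTree (Fin m) Bool) (x y : Fin m → Bool)
    (h : T.eval x ≠ T.eval y) : (chiW T (delta x) (delta y)).1 = 1 := by
  induction T with
  | leaf s => exact absurd rfl h
  | node j t0 t1 ih0 ih1 =>
    cases hx : x j <;> cases hy : y j
    · rw [chiW_node_ff t0 t1 hx hy]
      exact ih0 (by simpa [DTree.eval, hx, hy] using h)
    · rw [chiW_node_diff t0 t1 (by simp [hx, hy])]
    · rw [chiW_node_diff t0 t1 (by simp [hx, hy])]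
    · rw [chiW_node_tt t0 t1 hx hy]
      exact ih1 (by simpa [DTree.eval, hx, hy] using h)

/-- Sub-distribution: nonnegative with total mass at most 1. -/
def SubD (μ : (Fin m → Bool) → ℝ) : Prop := (∀ z, 0 ≤ μ z) ∧ ∑ z, μ z ≤ 1

lemma delta_subD (x : Fin m → Bool) : SubD (delta x) :=
  ⟨delta_nonneg x, le_of_eq (delta_sum x)⟩

lemma isDist_subD {μ : (Fin m → Bool) → ℝ} (h : IsDist μ) : SubD μ :=
  ⟨h.1, le_of_eq h.2⟩

lemma prb_nonneg {μ : (Fin m → Bool) → ℝ} (h : ∀ z, 0 ≤ μ z) (j : Fin m) (b : Bool) :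
    0 ≤ prb μ j b := by
  unfold prb
  apply Finset.sum_nonneg
  intro z _; split
  · exact h z
  · exact le_refl 0

lemma prb_le_sum {μ : (Fin m → Bool) → ℝ} (h : ∀ z, 0 ≤ μ z) (j : Fin m) (b : Bool) :
    prb μ j b ≤ ∑ z, μ z := by
  unfold prb
  apply Finset.sum_le_sum
  intro z _; split
  · exact le_refl _
  · exact h z

lemma condD_subD {μ : (Fin m → Bool) → ℝ} (h : SubD μ) (j : Fin m) (b : Bool) :
    SubD (condD μ j b) := by
  constructor
  · intro z
    unfold condD
    split
    · exact div_nonneg (h.1 z) (prb_nonneg h.1 j b)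
    · exact le_refl 0
  · by_cases hp : prb μ j b = 0
    · have hz : ∀ z, condD μ j b z = 0 := by
        intro z
        unfold condD
        split
        · rename_i hzb
          have : μ z = 0 := by
            have := Finset.sum_eq_zero_iff_of_nonneg (by
              intro w _
              split
              · exact h.1 w
              · exact le_refl 0) |>.mp hp
            have := this z (Finset.mem_univ z)
            simpa [hzb] using this
          simp [this]
        · rfl
      rw [Finset.sum_congr rfl (fun z _ => hz z)]
      simp
    · have hppos : 0 < prb μ j b := lt_of_le_of_ne (prb_nonneg h.1 j b) (Ne.symm hp)
      have : ∑ z, condD μ j b z = prb μ j b / prb μ j b := by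
        unfold condD prb
        rw [Finset.sum_div]
        apply Finset.sum_congr rfl
        intro z _
        split <;> simp
      rw [this, div_self hp]
end Aux2
section Aux3
variable {m : ℕ}

lemma chiW_bounds {S : Type} (T : DTree (Fin m) S) :
    ∀ μ0 μ1, SubD μ0 → SubD μ1 →
      0 ≤ (chiW T μ0 μ1).1 ∧ (chiW T μ0 μ1).1 ≤ 1 ∧
      0 ≤ (chiW T μ0 μ1).2 ∧ (chiW T μ0 μ1).2 ≤ (T.depth : ℝ) := by
  induction T with
  | leaf s => intro μ0 μ1 _ _; simp [chiW, DTree.depth]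
  | node j t0 t1 ih0 ih1 =>
    intro μ0 μ1 h0 h1
    obtain ⟨i01, i02, i03, i04⟩ := ih0 _ _ (condD_subD h0 j false) (condD_subD h1 j false)
    obtain ⟨i11, i12, i13, i14⟩ := ih1 _ _ (condD_subD h0 j true) (condD_subD h1 j true)
    have hp00 : 0 ≤ prb μ0 j false := prb_nonneg h0.1 j false
    have hp01 : prb μ0 j false ≤ 1 := le_trans (prb_le_sum h0.1 j false) h0.2
    have hp10 : 0 ≤ prb μ1 j false := prb_nonneg h1.1 j false
    have hp11 : prb μ1 j false ≤ 1 := le_trans (prb_le_sum h1.1 j false) h1.2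
    simp only [chiW]
    set p0 := prb μ0 j false with hp0def
    set p1 := prb μ1 j false with hp1def
    set r0 := chiW t0 (condD μ0 j false) (condD μ1 j false) with hr0def
    set r1 := chiW t1 (condD μ0 j true) (condD μ1 j true) with hr1def
    set d : ℝ := ((max t0.depth t1.depth : ℕ) : ℝ) with hddef
    have hdepth : ((DTree.node j t0 t1).depth : ℝ) = d + 1 := by
      simp [DTree.depth, hddef]
    have hd0 : (t0.depth : ℝ) ≤ d := by rw [hddef]; exact_mod_cast le_max_left _ _
    have hd1 : (t1.depth : ℝ) ≤ d := by rw [hddef]; exact_mod_cast le_max_right _ _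
    have hdnn : 0 ≤ d := by positivity
    have hm0a : 0 ≤ min p0 p1 := le_min hp00 hp10
    have hm1a : 0 ≤ min (1-p0) (1-p1) := le_min (by linarith) (by linarith)
    have habs : 0 ≤ |p0 - p1| := abs_nonneg _
    have hsum : |p0 - p1| + min p0 p1 + min (1-p0) (1-p1) ≤ 1 := by
      rcases le_total p0 p1 with h | h
      · rw [abs_of_nonpos (by linarith), min_eq_left h, min_eq_right (by linarith)]
        linarith
      · rw [abs_of_nonneg (by linarith), min_eq_right h, min_eq_left (by linarith)]
        linarith
    have P1 : min p0 p1 * r0.1 ≤ min p0 p1 * 1 := mul_le_mul_of_nonneg_left i02 hm0a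
    have P2 : min (1-p0) (1-p1) * r1.1 ≤ min (1-p0) (1-p1) * 1 :=
      mul_le_mul_of_nonneg_left i12 hm1a
    have P3 : min p0 p1 * r0.2 ≤ min p0 p1 * d :=
      mul_le_mul_of_nonneg_left (le_trans i04 hd0) hm0a
    have P4 : min (1-p0) (1-p1) * r1.2 ≤ min (1-p0) (1-p1) * d :=
      mul_le_mul_of_nonneg_left (le_trans i14 hd1) hm1a
    have Q1 : 0 ≤ min p0 p1 * r0.1 := mul_nonneg hm0a i01
    have Q2 : 0 ≤ min (1-p0) (1-p1) * r1.1 := mul_nonneg hm1a i11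
    have Q3 : 0 ≤ min p0 p1 * r0.2 := mul_nonneg hm0a i03
    have Q4 : 0 ≤ min (1-p0) (1-p1) * r1.2 := mul_nonneg hm1a i13
    have hmm : min p0 p1 + min (1-p0) (1-p1) ≤ 1 := by linarith
    have h5 : min p0 p1 * d + min (1-p0) (1-p1) * d ≤ d := by
      nlinarith [mul_le_mul_of_nonneg_right hmm hdnn]
    refine ⟨by linarith, by linarith, by linarith, ?_⟩
    rw [hdepth]
    linarith

end Aux3
section Aux4
variable {m : ℕ}

lemma preim_disjoint {g : Set ((Fin m → Bool) × Bool)} {x : Fin m → Bool}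
    (h0 : x ∈ preim g false) (h1 : x ∈ preim g true) : False := by
  simp only [preim, Set.mem_setOf_eq] at h0 h1
  exact h0.2 (by simpa using h1.1)

/-- Convert a decision tree computing `g` into a sabotage tree. -/
def sabToQ : DTree (Fin m) Bool → QTree (Fin m) Bool
  | .leaf s => .leaf s
  | .node i t0 t1 => .node i (fun s => match s with
      | Sab4.zero => sabToQ t0
      | Sab4.one => sabToQ t1
      | Sab4.star => .leaf false
      | Sab4.dag => .leaf true)

lemma sabToQ_eval_star (T : DTree (Fin m) Bool) (w : Fin m → Sab4) (x y : Fin m → Bool)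
    (hx : ConsistentWith x w) (hy : ConsistentWith y w)
    (hTx : T.eval x = false) (hTy : T.eval y = true)
    (hnd : ∀ i, w i ≠ Sab4.dag) : (sabToQ T).eval w = false := by
  induction T with
  | leaf s =>
    simp [DTree.eval] at hTx hTy
    rw [hTx] at hTy; exact absurd hTy (by simp)
  | node i t0 t1 ih0 ih1 =>
    cases h : w i with
    | zero =>
      have hxi := (hx i).1 h
      have hyi := (hy i).1 h
      simp only [sabToQ, QTree.eval, h]
      exact ih0 (by simpa [DTree.eval, hxi] using hTx) (by simpa [DTree.eval, hyi] using hTy)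
    | one =>
      have hxi := (hx i).2 h
      have hyi := (hy i).2 h
      simp only [sabToQ, QTree.eval, h]
      exact ih1 (by simpa [DTree.eval, hxi] using hTx) (by simpa [DTree.eval, hyi] using hTy)
    | star => simp [sabToQ, QTree.eval, h]
    | dag => exact absurd h (hnd i)

lemma sabToQ_eval_dag (T : DTree (Fin m) Bool) (w : Fin m → Sab4) (x y : Fin m → Bool)
    (hx : ConsistentWith x w) (hy : ConsistentWith y w)
    (hTx : T.eval x = false) (hTy : T.eval y = true)
    (hns : ∀ i, w i ≠ Sab4.star) : (sabToQ T).eval w = true := by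
  induction T with
  | leaf s =>
    simp [DTree.eval] at hTx hTy
    rw [hTx] at hTy; exact absurd hTy (by simp)
  | node i t0 t1 ih0 ih1 =>
    cases h : w i with
    | zero =>
      have hxi := (hx i).1 h
      have hyi := (hy i).1 h
      simp only [sabToQ, QTree.eval, h]
      exact ih0 (by simpa [DTree.eval, hxi] using hTx) (by simpa [DTree.eval, hyi] using hTy)
    | one =>
      have hxi := (hx i).2 h
      have hyi := (hy i).2 h
      simp only [sabToQ, QTree.eval, h]
      exact ih1 (by simpa [DTree.eval, hxi] using hTx) (by simpa [DTree.eval, hyi] using hTy)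
    | dag => simp [sabToQ, QTree.eval, h]
    | star => exact absurd h (hns i)

lemma sabToQ_sabComputes {g : Set ((Fin m → Bool) × Bool)} {T : DTree (Fin m) Bool}
    (hT : Computes T g) : SabComputes (sabToQ T) g := by
  intro w hw
  obtain ⟨hspec, ⟨x, hx, hxw⟩, ⟨y, hy, hyw⟩⟩ := hw
  have hTx : T.eval x = false := hT false x hx
  have hTy : T.eval y = true := hT true y hy
  constructor
  · intro hstar
    rcases hspec with ⟨_, hnd⟩ | ⟨_, hns⟩
    · exact sabToQ_eval_star T w x y hxw hyw hTx hTy hnd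
    · obtain ⟨i, hi⟩ := hstar
      exact absurd hi (hns i)
  · intro hdag
    rcases hspec with ⟨_, hnd⟩ | ⟨_, hns⟩
    · obtain ⟨i, hi⟩ := hdag
      exact absurd hi (hnd i)
    · exact sabToQ_eval_dag T w x y hxw hyw hTx hTy hns

lemma sabToQ_queries_le (T : DTree (Fin m) Bool) (w : Fin m → Sab4) (x y : Fin m → Bool)
    (hx : ConsistentWith x w) (hy : ConsistentWith y w)
    (hTx : T.eval x = false) (hTy : T.eval y = true) :
    (((sabToQ T).queries w : ℝ)) ≤ (chiW T (delta x) (delta y)).2 := by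
  induction T with
  | leaf s =>
    simp [DTree.eval] at hTx hTy
    rw [hTx] at hTy; exact absurd hTy (by simp)
  | node i t0 t1 ih0 ih1 =>
    have hone : (1:ℝ) ≤ (chiW (DTree.node i t0 t1) (delta x) (delta y)).2 := by
      by_cases hxy : x i = y i
      · cases hxi : x i
        · have hyi : y i = false := by rw [← hxy, hxi]
          rw [chiW_node_ff t0 t1 hxi hyi]
          have h1 : (chiW t0 (delta x) (delta y)).1 = 1 :=
            chiW_fst_eq_one t0 x y (by
              simp [DTree.eval, hxi, hyi] at hTx hTy
              simp [hTx, hTy])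
          have h2 := (chiW_bounds t0 (delta x) (delta y) (delta_subD x) (delta_subD y)).2.2.1
          simp only [h1]
          linarith
        · have hyi : y i = true := by rw [← hxy, hxi]
          rw [chiW_node_tt t0 t1 hxi hyi]
          have h1 : (chiW t1 (delta x) (delta y)).1 = 1 :=
            chiW_fst_eq_one t1 x y (by
              simp [DTree.eval, hxi, hyi] at hTx hTy
              simp [hTx, hTy])
          have h2 := (chiW_bounds t1 (delta x) (delta y) (delta_subD x) (delta_subD y)).2.2.1
          simp only [h1]
          linarith
      · rw [chiW_node_diff t0 t1 hxy]
    cases h : w i with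
    | zero =>
      have hxi := (hx i).1 h
      have hyi := (hy i).1 h
      rw [chiW_node_ff t0 t1 hxi hyi]
      have h1 : (chiW t0 (delta x) (delta y)).1 = 1 :=
        chiW_fst_eq_one t0 x y (by
          simp [DTree.eval, hxi, hyi] at hTx hTy
          simp [hTx, hTy])
      have hq := ih0 (by simpa [DTree.eval, hxi] using hTx) (by simpa [DTree.eval, hyi] using hTy)
      have : (sabToQ (DTree.node i t0 t1)).queries w = (sabToQ t0).queries w + 1 := by
        simp [sabToQ, QTree.queries, h]
      rw [this, h1]
      push_cast
      linarith
    | one =>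
      have hxi := (hx i).2 h
      have hyi := (hy i).2 h
      rw [chiW_node_tt t0 t1 hxi hyi]
      have h1 : (chiW t1 (delta x) (delta y)).1 = 1 :=
        chiW_fst_eq_one t1 x y (by
          simp [DTree.eval, hxi, hyi] at hTx hTy
          simp [hTx, hTy])
      have hq := ih1 (by simpa [DTree.eval, hxi] using hTx) (by simpa [DTree.eval, hyi] using hTy)
      have : (sabToQ (DTree.node i t0 t1)).queries w = (sabToQ t1).queries w + 1 := by
        simp [sabToQ, QTree.queries, h]
      rw [this, h1]
      push_cast
      linarith
    | star =>
      have : (sabToQ (DTree.node i t0 t1)).queries w = 1 := by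
        simp [sabToQ, QTree.queries, h]
      rw [this]
      exact_mod_cast hone
    | dag =>
      have : (sabToQ (DTree.node i t0 t1)).queries w = 1 := by
        simp [sabToQ, QTree.queries, h]
      rw [this]
      exact_mod_cast hone

end Aux4
section Aux5
open Classical
variable {m : ℕ}

/-- A complete decision tree computing any function of the queried variables. -/
def buildT (f : (Fin m → Bool) → Bool) : List (Fin m) → (Fin m → Bool) → DTree (Fin m) Bool
  | [], acc => .leaf (f acc)
  | i :: r, acc => .node i (buildT f r (Function.update acc i false))
      (buildT f r (Function.update acc i true))

lemma buildT_eval (f : (Fin m → Bool) → Bool) (l : List (Fin m)) :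
    ∀ acc x, (∀ i, i ∉ l → acc i = x i) → (buildT f l acc).eval x = f x := by
  induction l with
  | nil =>
    intro acc x h
    have : acc = x := funext (fun i => h i List.not_mem_nil)
    simp [buildT, DTree.eval, this]
  | cons i r ih =>
    intro acc x h
    cases hxi : x i
    · have : (buildT f (i :: r) acc).eval x = (buildT f r (Function.update acc i false)).eval x := by
        simp [buildT, DTree.eval, hxi]
      rw [this]
      apply ih
      intro k hk
      by_cases hki : k = i
      · subst hki; simp [Function.update, hxi]
      · rw [Function.update_of_ne hki]
        exact h k (by simp [hki, hk])
    · have : (buildT f (i :: r) acc).eval x = (buildT f r (Function.update acc i true)).eval x := by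
        simp [buildT, DTree.eval, hxi]
      rw [this]
      apply ih
      intro k hk
      by_cases hki : k = i
      · subst hki; simp [Function.update, hxi]
      · rw [Function.update_of_ne hki]
        exact h k (by simp [hki, hk])

lemma buildT_depth (f : (Fin m → Bool) → Bool) (l : List (Fin m)) :
    ∀ acc, (buildT f l acc).depth = l.length := by
  induction l with
  | nil => intro acc; simp [buildT, DTree.depth]
  | cons i r ih => intro acc; simp [buildT, DTree.depth, ih]

noncomputable def gval (g : Set ((Fin m → Bool) × Bool)) : (Fin m → Bool) → Bool :=
  fun x => if x ∈ preim g true then true else false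

noncomputable def fullT (g : Set ((Fin m → Bool) × Bool)) : DTree (Fin m) Bool :=
  buildT (gval g) (List.finRange m) (fun _ => false)

lemma fullT_eval (g : Set ((Fin m → Bool) × Bool)) (x : Fin m → Bool) :
    (fullT g).eval x = gval g x :=
  buildT_eval _ _ _ x (fun i hi => absurd (List.mem_finRange i) hi)

lemma fullT_computes (g : Set ((Fin m → Bool) × Bool)) : Computes (fullT g) g := by
  intro b x hx
  rw [fullT_eval]
  cases b
  · unfold gval
    rw [if_neg]
    intro h1
    exact preim_disjoint hx h1
  · unfold gval
    rw [if_pos hx]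

lemma fullT_depth (g : Set ((Fin m → Bool) × Bool)) : (fullT g).depth = m := by
  unfold fullT
  rw [buildT_depth]
  simp

/-- A complete sabotage tree. -/
def buildQ (f : (Fin m → Sab4) → Bool) : List (Fin m) → (Fin m → Sab4) → QTree (Fin m) Bool
  | [], acc => .leaf (f acc)
  | i :: r, acc => .node i (fun s => buildQ f r (Function.update acc i s))

lemma buildQ_eval (f : (Fin m → Sab4) → Bool) (l : List (Fin m)) :
    ∀ acc w, (∀ i, i ∉ l → acc i = w i) → (buildQ f l acc).eval w = f w := by
  induction l with
  | nil =>
    intro acc w h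
    have : acc = w := funext (fun i => h i List.not_mem_nil)
    simp [buildQ, QTree.eval, this]
  | cons i r ih =>
    intro acc w h
    have : (buildQ f (i :: r) acc).eval w = (buildQ f r (Function.update acc i (w i))).eval w := by
      simp [buildQ, QTree.eval]
    rw [this]
    apply ih
    intro k hk
    by_cases hki : k = i
    · subst hki; simp [Function.update]
    · rw [Function.update_of_ne hki]
      exact h k (by simp [hki, hk])

lemma buildQ_queries (f : (Fin m → Sab4) → Bool) (l : List (Fin m)) :
    ∀ acc w, (buildQ f l acc).queries w = l.length := by
  induction l with
  | nil => intro acc w; simp [buildQ, QTree.queries]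
  | cons i r ih => intro acc w; simp [buildQ, QTree.queries, ih]

noncomputable def sval (g : Set ((Fin m → Bool) × Bool)) : (Fin m → Sab4) → Bool :=
  fun w => if ∃ i, w i = Sab4.dag then true else false

noncomputable def fullQ (g : Set ((Fin m → Bool) × Bool)) : QTree (Fin m) Bool :=
  buildQ (sval g) (List.finRange m) (fun _ => Sab4.zero)

lemma fullQ_eval (g : Set ((Fin m → Bool) × Bool)) (w : Fin m → Sab4) :
    (fullQ g).eval w = sval g w :=
  buildQ_eval _ _ _ w (fun i hi => absurd (List.mem_finRange i) hi)

lemma fullQ_queries (g : Set ((Fin m → Bool) × Bool)) (w : Fin m → Sab4) :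
    (fullQ g).queries w = m := by
  unfold fullQ
  rw [buildQ_queries]
  simp

lemma fullQ_sabComputes (g : Set ((Fin m → Bool) × Bool)) : SabComputes (fullQ g) g := by
  intro w hw
  obtain ⟨hspec, _, _⟩ := hw
  constructor
  · intro hstar
    rw [fullQ_eval]
    unfold sval
    rw [if_neg]
    rcases hspec with ⟨_, hnd⟩ | ⟨_, hns⟩
    · rintro ⟨i, hi⟩; exact hnd i hi
    · obtain ⟨i, hi⟩ := hstar
      exact absurd hi (hns i)
  · intro hdag
    rw [fullQ_eval]
    unfold sval
    rcases hspec with ⟨_, hnd⟩ | ⟨_, hns⟩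
    · obtain ⟨i, hi⟩ := hdag
      exact absurd hi (hnd i)
    · rw [if_pos hdag]

end Aux5
section Aux6
variable {m : ℕ} (g : Set ((Fin m → Bool) × Bool))

/-- The set of expected query-cost profiles of zero-error randomized sabotage algorithms. -/
def Cset : Set ((Fin m → Sab4) → ℝ) :=
  {c | ∃ (k : ℕ) (wt : Fin k → ℝ) (T : Fin k → QTree (Fin m) Bool),
    IsDist wt ∧ (∀ i, SabComputes (T i) g) ∧
    ∀ w, c w = ∑ i, wt i * ((T i).queries w : ℝ)}

lemma cfull_mem : (fun _ => (m : ℝ)) ∈ Cset g := by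
  refine ⟨1, fun _ => 1, fun _ => fullQ g, ⟨fun _ => by norm_num, by simp⟩,
    fun _ => fullQ_sabComputes g, fun w => ?_⟩
  simp [fullQ_queries]

lemma Cset_nonneg {c : (Fin m → Sab4) → ℝ} (hc : c ∈ Cset g) : ∀ w, 0 ≤ c w := by
  obtain ⟨k, wt, T, hwt, _, hc⟩ := hc
  intro w
  rw [hc w]
  apply Finset.sum_nonneg
  intro i _
  exact mul_nonneg (hwt.1 i) (by positivity)

lemma Cset_convex : Convex ℝ (Cset g) := by
  rintro c1 ⟨k1, wt1, T1, hd1, hs1, hc1⟩ c2 ⟨k2, wt2, T2, hd2, hs2, hc2⟩ a b ha hb hab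
  refine ⟨k1 + k2, Fin.addCases (fun i => a * wt1 i) (fun i => b * wt2 i),
    Fin.addCases T1 T2, ⟨?_, ?_⟩, ?_, ?_⟩
  · intro i
    refine Fin.addCases (fun i => ?_) (fun i => ?_) i
    · simp only [Fin.addCases_left]
      exact mul_nonneg ha (hd1.1 i)
    · simp only [Fin.addCases_right]
      exact mul_nonneg hb (hd2.1 i)
  · rw [Fin.sum_univ_add]
    simp only [Fin.addCases_left, Fin.addCases_right]
    rw [← Finset.mul_sum, ← Finset.mul_sum, hd1.2, hd2.2]
    simpa using hab
  · intro i
    refine Fin.addCases (fun i => ?_) (fun i => ?_) i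
    · simp only [Fin.addCases_left]; exact hs1 i
    · simp only [Fin.addCases_right]; exact hs2 i
  · intro w
    simp only [Pi.add_apply, Pi.smul_apply, smul_eq_mul]
    rw [Fin.sum_univ_add]
    simp only [Fin.addCases_left, Fin.addCases_right]
    rw [hc1 w, hc2 w, Finset.mul_sum, Finset.mul_sum]
    congr 1 <;> (apply Finset.sum_congr rfl; intro i _; ring)

end Aux6
section Aux7
open Classical
variable {m : ℕ}

noncomputable def ip (lam c : (Fin m → Sab4) → ℝ) : ℝ := ∑ w, lam w * c w

noncomputable def iC (g : Set ((Fin m → Bool) × Bool)) (lam : (Fin m → Sab4) → ℝ) : ℝ :=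
  sInf {r | ∃ c ∈ Cset g, r = ip lam c}

def Lmem (g : Set ((Fin m → Bool) × Bool)) (lam : (Fin m → Sab4) → ℝ) : Prop :=
  (∀ w, 0 ≤ lam w) ∧ (∀ w, ¬ SabValid g w → lam w = 0) ∧ ∑ w, lam w = 1

noncomputable def Lset (g : Set ((Fin m → Bool) × Bool)) : Set ℝ :=
  {r | ∃ lam, Lmem g lam ∧ r = iC g lam}

def MCset (g : Set ((Fin m → Bool) × Bool)) : Set ℝ :=
  { c : ℝ | ∃ (k : ℕ) (w : Fin k → ℝ) (M0 M1 : Fin k → ((Fin m → Bool) → ℝ)),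
    IsDist w ∧
    (∀ j, IsDist (M0 j) ∧ IsDist (M1 j) ∧
      SuppIn (M0 j) (preim g false) ∧ SuppIn (M1 j) (preim g true)) ∧
    c = sInf { x : ℝ | ∃ T : DTree (Fin m) Bool, Computes T g ∧
      x = ∑ j, w j * chi T (M0 j) (M1 j) } }

lemma maxConflict_eq (g : Set ((Fin m → Bool) × Bool)) : maxConflict g = sSup (MCset g) := rfl

lemma ipset_nonempty (g : Set ((Fin m → Bool) × Bool)) (lam : (Fin m → Sab4) → ℝ) :
    {r | ∃ c ∈ Cset g, r = ip lam c}.Nonempty :=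
  ⟨ip lam (fun _ => (m:ℝ)), ⟨_, cfull_mem g, rfl⟩⟩

lemma ip_nonneg {g : Set ((Fin m → Bool) × Bool)} {lam c : (Fin m → Sab4) → ℝ}
    (hlam : ∀ w, 0 ≤ lam w) (hc : c ∈ Cset g) : 0 ≤ ip lam c :=
  Finset.sum_nonneg (fun w _ => mul_nonneg (hlam w) (Cset_nonneg g hc w))

lemma ipset_bddBelow (g : Set ((Fin m → Bool) × Bool)) {lam : (Fin m → Sab4) → ℝ}
    (hlam : ∀ w, 0 ≤ lam w) : BddBelow {r | ∃ c ∈ Cset g, r = ip lam c} := by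
  refine ⟨0, ?_⟩
  rintro r ⟨c, hc, rfl⟩
  exact ip_nonneg hlam hc

lemma iC_le_ip {g : Set ((Fin m → Bool) × Bool)} {lam c : (Fin m → Sab4) → ℝ}
    (hlam : ∀ w, 0 ≤ lam w) (hc : c ∈ Cset g) : iC g lam ≤ ip lam c :=
  csInf_le (ipset_bddBelow g hlam) ⟨c, hc, rfl⟩

lemma iC_le_m {g : Set ((Fin m → Bool) × Bool)} {lam : (Fin m → Sab4) → ℝ}
    (hlam : Lmem g lam) : iC g lam ≤ m := by
  refine le_trans (iC_le_ip hlam.1 (cfull_mem g)) ?_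
  unfold ip
  have hcalc : ∑ w, lam w * (m:ℝ) = m := by
    rw [← Finset.sum_mul, hlam.2.2, one_mul]
  exact le_of_eq hcalc

lemma Lset_bddAbove (g : Set ((Fin m → Bool) × Bool)) : BddAbove (Lset g) := by
  refine ⟨m, ?_⟩
  rintro r ⟨lam, hlam, rfl⟩
  exact iC_le_m hlam

lemma MCset_bddAbove (g : Set ((Fin m → Bool) × Bool)) : BddAbove (MCset g) := by
  refine ⟨m, ?_⟩
  rintro c ⟨k, w, M0, M1, hw, hM, rfl⟩
  have hmem : (∑ j, w j * chi (fullT g) (M0 j) (M1 j)) ∈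
      { x : ℝ | ∃ T : DTree (Fin m) Bool, Computes T g ∧
        x = ∑ j, w j * chi T (M0 j) (M1 j) } := ⟨fullT g, fullT_computes g, rfl⟩
  have hbdd : BddBelow { x : ℝ | ∃ T : DTree (Fin m) Bool, Computes T g ∧
      x = ∑ j, w j * chi T (M0 j) (M1 j) } := by
    refine ⟨0, ?_⟩
    rintro x ⟨T, _, rfl⟩
    apply Finset.sum_nonneg
    intro j _
    exact mul_nonneg (hw.1 j)
      ((chiW_bounds T (M0 j) (M1 j) (isDist_subD (hM j).1) (isDist_subD (hM j).2.1)).2.2.1)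
  refine le_trans (csInf_le hbdd hmem) ?_
  have hbound : ∀ j : Fin k, w j * chi (fullT g) (M0 j) (M1 j) ≤ w j * m := by
    intro j
    apply mul_le_mul_of_nonneg_left _ (hw.1 j)
    have := (chiW_bounds (fullT g) (M0 j) (M1 j)
      (isDist_subD (hM j).1) (isDist_subD (hM j).2.1)).2.2.2
    rwa [fullT_depth g] at this
  calc ∑ j, w j * chi (fullT g) (M0 j) (M1 j) ≤ ∑ j, w j * m := Finset.sum_le_sum (fun j _ => hbound j)
  _ = (∑ j, w j) * m := by rw [Finset.sum_mul]
  _ = m := by rw [hw.2, one_mul]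

lemma iC_le_maxConflict (g : Set ((Fin m → Bool) × Bool))
    (h0 : (preim g false).Nonempty) (h1 : (preim g true).Nonempty)
    (lam : (Fin m → Sab4) → ℝ) (hlam : Lmem g lam) : iC g lam ≤ maxConflict g := by
  obtain ⟨xbar, hxbar⟩ := h0
  obtain ⟨ybar, hybar⟩ := h1
  set N := Fintype.card (Fin m → Sab4) with hN
  set e : Fin N ≃ (Fin m → Sab4) := (Fintype.equivFin (Fin m → Sab4)).symm with he
  have hchoicex : ∀ w : Fin m → Sab4, ∃ x, x ∈ preim g false ∧
      (SabValid g w → ConsistentWith x w) := by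
    intro w
    by_cases h : SabValid g w
    · obtain ⟨x, hx1, hx2⟩ := h.2.1
      exact ⟨x, hx1, fun _ => hx2⟩
    · exact ⟨xbar, hxbar, fun hv => absurd hv h⟩
  have hchoicey : ∀ w : Fin m → Sab4, ∃ y, y ∈ preim g true ∧
      (SabValid g w → ConsistentWith y w) := by
    intro w
    by_cases h : SabValid g w
    · obtain ⟨y, hy1, hy2⟩ := h.2.2
      exact ⟨y, hy1, fun _ => hy2⟩
    · exact ⟨ybar, hybar, fun hv => absurd hv h⟩
  choose xsel hxsel0 hxcons using hchoicex
  choose ysel hysel1 hycons using hchoicey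
  set wj : Fin N → ℝ := fun j => lam (e j) with hwj
  set M0 : Fin N → ((Fin m → Bool) → ℝ) := fun j => delta (xsel (e j)) with hM0
  set M1 : Fin N → ((Fin m → Bool) → ℝ) := fun j => delta (ysel (e j)) with hM1
  set Inner : Set ℝ := { x : ℝ | ∃ T : DTree (Fin m) Bool, Computes T g ∧
      x = ∑ j, wj j * chi T (M0 j) (M1 j) } with hInner
  have hInner_ne : Inner.Nonempty := ⟨_, fullT g, fullT_computes g, rfl⟩
  have hInner_bdd : BddBelow Inner := by
    refine ⟨0, ?_⟩
    rintro x ⟨T, _, rfl⟩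
    apply Finset.sum_nonneg
    intro j _
    exact mul_nonneg (hlam.1 (e j))
      ((chiW_bounds T (M0 j) (M1 j) (delta_subD _) (delta_subD _)).2.2.1)
  have hmemMC : sInf Inner ∈ MCset g := by
    refine ⟨N, wj, M0, M1, ⟨fun j => hlam.1 (e j), ?_⟩, fun j =>
      ⟨delta_isDist _, delta_isDist _, ?_, ?_⟩, rfl⟩
    · rw [hwj]
      calc ∑ j, lam (e j) = ∑ w, lam w := Equiv.sum_comp e lam
      _ = 1 := hlam.2.2
    · intro z hz
      have : z = xsel (e j) := by
        by_contra hne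
        exact hz (by simp [hM0, delta, hne])
      rw [this]; exact hxsel0 _
    · intro z hz
      have : z = ysel (e j) := by
        by_contra hne
        exact hz (by simp [hM1, delta, hne])
      rw [this]; exact hysel1 _
  have hiCle : iC g lam ≤ sInf Inner := by
    apply le_csInf hInner_ne
    rintro x ⟨T, hT, rfl⟩
    have hcT : (fun w => ((sabToQ T).queries w : ℝ)) ∈ Cset g := by
      refine ⟨1, fun _ => 1, fun _ => sabToQ T, ⟨fun _ => by norm_num, by simp⟩,
        fun _ => sabToQ_sabComputes hT, fun w => by simp⟩
    refine le_trans (iC_le_ip hlam.1 hcT) ?_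
    unfold ip
    rw [← Equiv.sum_comp e (fun w => lam w * ((sabToQ T).queries w : ℝ))]
    apply Finset.sum_le_sum
    intro j _
    by_cases hv : SabValid g (e j)
    · apply mul_le_mul_of_nonneg_left _ (hlam.1 (e j))
      exact sabToQ_queries_le T (e j) _ _ (hxcons _ hv) (hycons _ hv)
        (hT false _ (hxsel0 _)) (hT true _ (hysel1 _))
    · have hz : wj j = 0 := hlam.2.1 _ hv
      rw [hz, hlam.2.1 _ hv]
      simp
  refine le_trans hiCle ?_
  rw [maxConflict_eq]
  exact le_csSup (MCset_bddAbove g) hmemMC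

end Aux7
section Aux8
open Classical
variable {m : ℕ}

def RSset (g : Set ((Fin m → Bool) × Bool)) : Set ℝ :=
  { c : ℝ | ∃ (k : ℕ) (wt : Fin k → ℝ) (T : Fin k → QTree (Fin m) Bool),
    IsDist wt ∧ (∀ i, SabComputes (T i) g) ∧
    ∀ w : Fin m → Sab4, SabValid g w → ∑ i, wt i * ((T i).queries w : ℝ) ≤ c }

lemma RS_eq (g : Set ((Fin m → Bool) × Bool)) : RS g = sInf (RSset g) := rfl

lemma exists_sabValid (g : Set ((Fin m → Bool) × Bool))
    (h0 : (preim g false).Nonempty) (h1 : (preim g true).Nonempty) :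
    ∃ w, SabValid g w := by
  obtain ⟨x, hx⟩ := h0
  obtain ⟨y, hy⟩ := h1
  have hxy : x ≠ y := fun h => preim_disjoint hx (h ▸ hy)
  obtain ⟨i0, hi0⟩ := Function.ne_iff.mp hxy
  refine ⟨fun i => if x i = y i then (if x i then Sab4.one else Sab4.zero) else Sab4.star,
    ⟨Or.inl ⟨⟨i0, by dsimp only; rw [if_neg hi0]⟩,
      fun i => by dsimp only; split_ifs <;> simp⟩, ⟨x, hx, ?_⟩, ⟨y, hy, ?_⟩⟩⟩
  · intro i
    dsimp only
    constructor
    · intro h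
      split_ifs at h with h1' h2' <;> simp_all
    · intro h
      split_ifs at h with h1' h2' <;> simp_all
  · intro i
    dsimp only
    constructor
    · intro h
      split_ifs at h with h1' h2' <;> simp_all
    · intro h
      split_ifs at h with h1' h2' <;> simp_all

lemma RSset_bddBelow (g : Set ((Fin m → Bool) × Bool)) (hex : ∃ w, SabValid g w) :
    BddBelow (RSset g) := by
  obtain ⟨w0, hw0⟩ := hex
  refine ⟨0, ?_⟩
  rintro c ⟨k, wt, T, hd, hs, hc⟩
  refine le_trans ?_ (hc w0 hw0)
  apply Finset.sum_nonneg
  intro i _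
  exact mul_nonneg (hd.1 i) (by positivity)

lemma RS_le_vval_add (g : Set ((Fin m → Bool) × Bool))
    (h0 : (preim g false).Nonempty) (h1 : (preim g true).Nonempty)
    {ε : ℝ} (hε : 0 < ε) : RS g ≤ sSup (Lset g) + ε := by
  obtain ⟨w0, hw0⟩ := exists_sabValid g h0 h1
  set t := sSup (Lset g) + ε with ht
  by_cases hcap : ∃ c ∈ Cset g, ∀ w, SabValid g w → c w < t
  · obtain ⟨c, ⟨k, wt, T, hd, hs, hc⟩, hlt⟩ := hcap
    have hmem : t ∈ RSset g := by
      refine ⟨k, wt, T, hd, hs, fun w hw => ?_⟩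
      rw [← hc w]
      exact (hlt w hw).le
    rw [RS_eq]
    exact csInf_le (RSset_bddBelow g ⟨w0, hw0⟩) hmem
  · exfalso
    set D : Set ((Fin m → Sab4) → ℝ) := {d | ∀ w, SabValid g w → d w < t} with hD
    have hdisj : Disjoint D (Cset g) := by
      rw [Set.disjoint_left]
      intro d hdD hdC
      exact hcap ⟨d, hdC, hdD⟩
    have hDopen : IsOpen D := by
      have hrw : D = ⋂ w : Fin m → Sab4,
          {d : (Fin m → Sab4) → ℝ | SabValid g w → d w < t} := by
        ext d
        simp only [hD, Set.mem_setOf_eq, Set.mem_iInter]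
      rw [hrw]
      apply isOpen_iInter_of_finite
      intro w
      by_cases hv : SabValid g w
      · have : {d : (Fin m → Sab4) → ℝ | SabValid g w → d w < t} = {d | d w < t} := by
          ext d; simp [hv]
        rw [this]
        exact isOpen_lt (continuous_apply w) continuous_const
      · have : {d : (Fin m → Sab4) → ℝ | SabValid g w → d w < t} = Set.univ := by
          ext d; simp [hv]
        rw [this]
        exact isOpen_univ
    have hDconv : Convex ℝ D := by
      intro d1 hd1 d2 hd2 a b ha hb hab
      rw [hD]
      intro w hw
      have e1 : d1 w < t := hd1 w hw
      have e2 : d2 w < t := hd2 w hw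
      show a * d1 w + b * d2 w < t
      rcases ha.eq_or_lt with heq | hpos
      · have hb1 : b = 1 := by linarith
        rw [← heq, hb1]
        simpa using e2
      · have habt : a * t + b * t = t := by rw [← add_mul, hab, one_mul]
        have k1 := mul_lt_mul_of_pos_left e1 hpos
        have k2 := mul_le_mul_of_nonneg_left e2.le hb
        linarith
    obtain ⟨f, u, hfD, hfC⟩ :=
      geometric_hahn_banach_open hDconv hDopen (Cset_convex g) hdisj
    set ev : (Fin m → Sab4) → ((Fin m → Sab4) → ℝ) :=
      fun w => (fun j => if w = j then (1:ℝ) else 0) with hev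
    have hexp : ∀ c : (Fin m → Sab4) → ℝ, f c = ∑ w, c w * f (ev w) := by
      intro c
      conv_lhs => rw [pi_eq_sum_univ c]
      rw [map_sum]
      apply Finset.sum_congr rfl
      intro w _
      rw [map_smul, smul_eq_mul, hev]
    set d0 : (Fin m → Sab4) → ℝ := fun _ => t - 1 with hd0def
    have hd0D : d0 ∈ D := by
      rw [hD]
      intro w _
      simp only [hd0def]
      linarith
    have hfd0 := hfD d0 hd0D
    have hlamnn : ∀ w, 0 ≤ f (ev w) := by
      intro w
      by_contra hneg'
      push_neg at hneg'
      set s : ℝ := min 0 ((u - f d0) / f (ev w)) with hs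
      have hs0 : s ≤ 0 := min_le_left _ _
      have hsq : s ≤ (u - f d0) / f (ev w) := min_le_right _ _
      have hmul : u - f d0 ≤ s * f (ev w) := by
        have h2 : ((u - f d0) / f (ev w)) * f (ev w) ≤ s * f (ev w) :=
          mul_le_mul_of_nonpos_right hsq hneg'.le
        rwa [div_mul_cancel₀ _ (ne_of_lt hneg')] at h2
      have hdD : d0 + s • ev w ∈ D := by
        rw [hD]
        intro w' hw'
        have hval : (d0 + s • ev w) w' = (t-1) + s * (if w = w' then 1 else 0) := by
          simp [hd0def, hev, smul_eq_mul]
        rw [hval]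
        by_cases hww : w = w'
        · rw [if_pos hww]; linarith
        · rw [if_neg hww]; linarith
      have hfd := hfD _ hdD
      rw [map_add, map_smul, smul_eq_mul] at hfd
      linarith
    have hlaminv : ∀ w, ¬SabValid g w → f (ev w) = 0 := by
      intro w hw
      refine le_antisymm ?_ (hlamnn w)
      by_contra hpos'
      push_neg at hpos'
      set s : ℝ := max 0 ((u - f d0) / f (ev w)) with hs
      have hsq : (u - f d0) / f (ev w) ≤ s := le_max_right _ _
      have hmul : u - f d0 ≤ s * f (ev w) := by
        have h2 : ((u - f d0) / f (ev w)) * f (ev w) ≤ s * f (ev w) :=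
          mul_le_mul_of_nonneg_right hsq hpos'.le
        rwa [div_mul_cancel₀ _ (ne_of_gt hpos')] at h2
      have hdD : d0 + s • ev w ∈ D := by
        rw [hD]
        intro w' hw'
        have hval : (d0 + s • ev w) w' = (t-1) + s * (if w = w' then 1 else 0) := by
          simp [hd0def, hev, smul_eq_mul]
        rw [hval]
        have hne : w ≠ w' := by rintro rfl; exact hw hw'
        rw [if_neg hne]
        linarith
      have hfd := hfD _ hdD
      rw [map_add, map_smul, smul_eq_mul] at hfd
      linarith
    set Ssum : ℝ := ∑ w, f (ev w) with hSsum
    have hSnn : 0 ≤ Ssum := Finset.sum_nonneg (fun w _ => hlamnn w)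
    have hSpos : 0 < Ssum := by
      rcases hSnn.eq_or_lt with heq | h
      · exfalso
        have hall := (Finset.sum_eq_zero_iff_of_nonneg
          (fun w (_ : w ∈ Finset.univ) => hlamnn w)).mp heq.symm
        have hf0 : ∀ c : (Fin m → Sab4) → ℝ, f c = 0 := by
          intro c
          rw [hexp]
          apply Finset.sum_eq_zero
          intro w hwu
          rw [hall w hwu, mul_zero]
        have h2' := hfC _ (cfull_mem g)
        rw [hf0] at h2'
        rw [hf0] at hfd0
        linarith
      · exact h
    set lam : (Fin m → Sab4) → ℝ := fun w => f (ev w) / Ssum with hlam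
    have hlammem : Lmem g lam := by
      refine ⟨fun w => div_nonneg (hlamnn w) hSnn, fun w hw => ?_, ?_⟩
      · simp only [hlam, hlaminv w hw, zero_div]
      · simp only [hlam]
        rw [← Finset.sum_div, div_self (ne_of_gt hSpos)]
    have htu : t ≤ u / Ssum := by
      by_contra hlt
      push_neg at hlt
      have hdD : (fun (_ : Fin m → Sab4) => u / Ssum) ∈ D := by
        rw [hD]
        intro w' _
        exact hlt
      have hfd := hfD _ hdD
      rw [hexp] at hfd
      have heval : ∑ w, (u / Ssum) * f (ev w) = u := by
        rw [← Finset.mul_sum, ← hSsum, div_mul_cancel₀ u (ne_of_gt hSpos)]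
      rw [heval] at hfd
      exact lt_irrefl u hfd
    have hiC : t ≤ iC g lam := by
      apply le_csInf (ipset_nonempty g lam)
      rintro r ⟨c, hcC, rfl⟩
      have h1' : ip lam c = f c / Ssum := by
        rw [hexp c]
        unfold ip
        rw [Finset.sum_div]
        apply Finset.sum_congr rfl
        intro w _
        simp only [hlam]
        ring
      rw [h1']
      calc t ≤ u / Ssum := htu
      _ ≤ f c / Ssum := by
          have := hfC c hcC
          gcongr
    have hmemL : iC g lam ∈ Lset g := ⟨lam, hlammem, rfl⟩
    have hle := le_csSup (Lset_bddAbove g) hmemL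
    rw [ht] at hiC
    linarith

end Aux8
/-- For every partial Boolean function `g ⊆ {0,1}^m × {0,1}`, the max conflict
complexity is at least the sabotage complexity: `χ̄(g) ≥ RS(g)`. -/
theorem maxConflict_ge_RS (m : ℕ) (g : Set ((Fin m → Bool) × Bool)) :
    RS g ≤ maxConflict g := by
  classical
  by_cases hne : (preim g false).Nonempty ∧ (preim g true).Nonempty
  · obtain ⟨h0, h1⟩ := hne
    have hvv : sSup (Lset g) ≤ maxConflict g := by
      apply csSup_le
      · obtain ⟨w0, hw0⟩ := exists_sabValid g h0 h1
        refine ⟨iC g (fun w => if w = w0 then 1 else 0),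
          fun w => if w = w0 then 1 else 0, ⟨?_, ?_, ?_⟩, rfl⟩
        · intro w; dsimp only; split <;> norm_num
        · intro w hw
          dsimp only
          rw [if_neg]
          rintro rfl
          exact hw hw0
        · simp
      · rintro r ⟨lam, hlam, rfl⟩
        exact iC_le_maxConflict g h0 h1 lam hlam
    by_contra hlt
    push_neg at hlt
    have hε : (0:ℝ) < (RS g - maxConflict g)/2 := by linarith
    have h2 := RS_le_vval_add g h0 h1 hε
    linarith
  · have hMC : maxConflict g = 0 := by
      rw [maxConflict_eq]
      have hempty : MCset g = ∅ := by
        ext c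
        simp only [Set.mem_empty_iff_false, iff_false]
        rintro ⟨k, w, M0, M1, hw, hM, _⟩
        have hk : k ≠ 0 := by
          rintro rfl
          have := hw.2
          simp at this
        set j : Fin k := ⟨0, Nat.pos_of_ne_zero hk⟩ with hj
        have hex0 : ∃ z, M0 j z ≠ 0 := by
          by_contra hz
          push_neg at hz
          have hsum := (hM j).1.2
          rw [Finset.sum_congr rfl (fun z _ => hz z)] at hsum
          simp at hsum
        have hex1 : ∃ z, M1 j z ≠ 0 := by
          by_contra hz
          push_neg at hz
          have hsum := (hM j).2.1.2
          rw [Finset.sum_congr rfl (fun z _ => hz z)] at hsum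
          simp at hsum
        obtain ⟨z0, hz0⟩ := hex0
        obtain ⟨z1, hz1⟩ := hex1
        exact hne ⟨⟨z0, (hM j).2.2.1 z0 hz0⟩, ⟨z1, (hM j).2.2.2 z1 hz1⟩⟩
      rw [hempty, Real.sSup_empty]
    have hRS : RS g = 0 := by
      rw [RS_eq]
      have huniv : RSset g = Set.univ := by
        ext c
        simp only [Set.mem_univ, iff_true]
        refine ⟨1, fun _ => 1, fun _ => QTree.leaf false,
          ⟨fun _ => by norm_num, by simp⟩, ?_, ?_⟩
        · intro i w hw
          exfalso
          obtain ⟨_, ⟨x, hx, _⟩, ⟨y, hy, _⟩⟩ := hw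
          exact hne ⟨⟨x, hx⟩, ⟨y, hy⟩⟩
        · intro w hw
          exfalso
          obtain ⟨_, ⟨x, hx, _⟩, ⟨y, hy, _⟩⟩ := hw
          exact hne ⟨⟨x, hx⟩, ⟨y, hy⟩⟩
      rw [huniv]
      have hnb : ¬ BddBelow (Set.univ : Set ℝ) := by
        rintro ⟨b, hb⟩
        have := hb (Set.mem_univ (b - 1))
        linarith
      rw [csInf_of_not_bddBelow hnb, Real.sInf_empty]
    rw [hRS, hMC]
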